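/- arXiv:math/0412144 — 11 statements merged into one kernel-verified Lean document; each statement's English description precedes it below -/
import Mathlib

section
/- Let p, q be subspaces of a finite-dimensional complex inner product space. Then p = q if and only if (p ⊔ q) ⊓ (pᗮ ⊔ qᗮ) = ⊥. -/
theorem eq_iff_sup_inf_compl_sup_eq_bot
    {E : Type*} [NormedAddCommGroup E] [InnerProductSpace ℂ E]
    [FiniteDimensional ℂ E] (p q : Submodule ℂ E) :
    p = q ↔ (p ⊔ q) ⊓ (pᗮ ⊔ qᗮ) = ⊥ := by
  constructor
  · rintro rfl
    simp [Submodule.inf_orthogonal_eq_bot]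
  · intro h
    have hsup : pᗮ ⊔ qᗮ = (p ⊓ q)ᗮ := by
      rw [← Submodule.orthogonal_orthogonal (pᗮ ⊔ qᗮ)]
      congr 1
      rw [← Submodule.inf_orthogonal, Submodule.orthogonal_orthogonal,
        Submodule.orthogonal_orthogonal]
    rw [hsup] at h
    have hdisj : Disjoint (p ⊔ q) (p ⊓ q)ᗮ := disjoint_iff.mpr h
    have hle : Module.finrank ℂ ↥(p ⊔ q) + Module.finrank ℂ ↥(p ⊓ q)ᗮ ≤
        Module.finrank ℂ E := by
      rw [← Submodule.finrank_sup_add_finrank_inf_eq, hdisj.eq_bot]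
      simpa using Submodule.finrank_le ((p ⊔ q) ⊔ (p ⊓ q)ᗮ)
    have horth : Module.finrank ℂ ↥(p ⊓ q) + Module.finrank ℂ ↥(p ⊓ q)ᗮ =
        Module.finrank ℂ E := Submodule.finrank_add_finrank_orthogonal _
    have hdim : Module.finrank ℂ ↥(p ⊔ q) ≤ Module.finrank ℂ ↥(p ⊓ q) := by omega
    have heq : p ⊓ q = p ⊔ q :=
      Submodule.eq_of_le_of_finrank_le (le_trans inf_le_left le_sup_left) hdim
    have h1 : p ≤ q := le_trans le_sup_left (heq ▸ inf_le_right)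
    have h2 : q ≤ p := le_trans le_sup_right (heq ▸ inf_le_left)
    exact le_antisymm h1 h2
end

section
/- Let p, q, r be subspaces of a finite-dimensional complex inner product space. Then α(p,q,r) ≤ pᗮ, i.e., the distributivity test formula evaluated at p, q, r is contained in the orthogonal complement of p. -/
/-- The distributivity test formula `α(p,q,r) = (a ⊔ b) ⊓ (aᗮ ⊔ bᗮ)` where
`a = p ⊔ (q ⊓ r)` and `b = (p ⊔ q) ⊓ (p ⊔ r)`. -/
noncomputable def distribTest {E : Type*} [NormedAddCommGroup E] [InnerProductSpace ℂ E]
    (p q r : Submodule ℂ E) : Submodule ℂ E :=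
  ((p ⊔ (q ⊓ r)) ⊔ ((p ⊔ q) ⊓ (p ⊔ r))) ⊓ ((p ⊔ (q ⊓ r))ᗮ ⊔ ((p ⊔ q) ⊓ (p ⊔ r))ᗮ)

theorem distribTest_le_compl
    {E : Type*} [NormedAddCommGroup E] [InnerProductSpace ℂ E]
    [FiniteDimensional ℂ E] (p q r : Submodule ℂ E) :
    distribTest p q r ≤ pᗮ := by
  refine inf_le_right.trans (sup_le ?_ ?_)
  · exact Submodule.orthogonal_le le_sup_left
  · exact Submodule.orthogonal_le (le_inf le_sup_left le_sup_left)
end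

section
/- Let p, q, r be any three subspaces of an n-dimensional complex inner product space. Then 2 · dim(α(p,q,r)) ≤ n, i.e., the dimension of the distributivity test formula evaluated at p, q, r is at most n/2. -/
/-!
Since `a ≤ b`, the test formula collapses to `aᗮ ⊓ b`, the orthogonal complement of `a` in `b`,
of dimension `dim b - dim a`. The dimension formula for `⊔` and `⊓` identifies this defect with
the defect of the dual distributive law, `dim (p ⊓ (q ⊔ r)) - dim ((p ⊓ q) ⊔ (p ⊓ r))`, which is
at most `dim p`. On the other hand `dim b - dim a ≤ n - dim p` because `p ≤ a`; adding the two
bounds gives `2 (dim b - dim a) ≤ n`.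
-/

open Module

namespace Submodule

section DivisionRing

variable {K V : Type*} [DivisionRing K] [AddCommGroup V] [Module K V] [FiniteDimensional K V]

theorem finrank_sup_inf_sup_add_finrank_inf_sup_inf (p q r : Submodule K V) :
    finrank K ↥((p ⊔ q) ⊓ (p ⊔ r)) + finrank K ↥(p ⊓ q ⊔ p ⊓ r) =
      finrank K ↥(p ⊔ q ⊓ r) + finrank K ↥(p ⊓ (q ⊔ r)) := by
  have hpq := finrank_sup_add_finrank_inf_eq p q
  have hpr := finrank_sup_add_finrank_inf_eq p r
  have hqr := finrank_sup_add_finrank_inf_eq q r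
  have hb := finrank_sup_add_finrank_inf_eq (p ⊔ q) (p ⊔ r)
  have ha := finrank_sup_add_finrank_inf_eq p (q ⊓ r)
  have hp_sup := finrank_sup_add_finrank_inf_eq p (q ⊔ r)
  have hp_inf := finrank_sup_add_finrank_inf_eq (p ⊓ q) (p ⊓ r)
  rw [← sup_sup_distrib_left] at hb
  rw [← inf_inf_distrib_left] at hp_inf
  omega

theorem finrank_sup_inf_sup_le (p q r : Submodule K V) :
    finrank K ↥((p ⊔ q) ⊓ (p ⊔ r)) ≤ finrank K ↥(p ⊔ q ⊓ r) + finrank K p := by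
  have := finrank_sup_inf_sup_add_finrank_inf_sup_inf p q r
  have : finrank K ↥(p ⊓ (q ⊔ r)) ≤ finrank K p := finrank_mono inf_le_left
  omega

end DivisionRing

variable {𝕜 E : Type*} [RCLike 𝕜] [NormedAddCommGroup E] [InnerProductSpace 𝕜 E]

theorem sup_inf_orthogonal_sup_orthogonal_of_le {a b : Submodule 𝕜 E} (h : a ≤ b) :
    (a ⊔ b) ⊓ (aᗮ ⊔ bᗮ) = aᗮ ⊓ b := by
  rw [sup_eq_right.mpr h, sup_eq_left.mpr (orthogonal_le h), inf_comm]

end Submodule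

open Submodule in
theorem distribTest_eq {E : Type*} [NormedAddCommGroup E] [InnerProductSpace ℂ E]
    (p q r : Submodule ℂ E) :
    distribTest p q r = (p ⊔ q ⊓ r)ᗮ ⊓ ((p ⊔ q) ⊓ (p ⊔ r)) :=
  sup_inf_orthogonal_sup_orthogonal_of_le sup_inf_le

theorem two_mul_finrank_distribTest_le
    {E : Type*} [NormedAddCommGroup E] [InnerProductSpace ℂ E]
    [FiniteDimensional ℂ E] (n : ℕ) (hn : Module.finrank ℂ E = n)
    (p q r : Submodule ℂ E) :
    2 * Module.finrank ℂ (distribTest p q r) ≤ n := by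
  have h_split := Submodule.finrank_add_inf_finrank_orthogonal (sup_inf_le : p ⊔ q ⊓ r ≤ _)
  have h_defect := Submodule.finrank_sup_inf_sup_le p q r
  have hp_le_a : finrank ℂ p ≤ finrank ℂ ↥(p ⊔ q ⊓ r) := Submodule.finrank_mono le_sup_left
  have hb_le_n : finrank ℂ ↥((p ⊔ q) ⊓ (p ⊔ r)) ≤ n := hn ▸ Submodule.finrank_le _
  rw [distribTest_eq]
  omega
end

section
/- Let p, q, r be subspaces of an n-dimensional complex inner product space. Then dim(α(p,q,r)ᗮ) + dim(p) + dim(q ⊔ r) + dim(p ⊓ q ⊓ r) = n + dim(p ⊔ q ⊔ r) + dim(p ⊓ q) + dim(p ⊓ r). (Equivalently, dim(ᾱ) = [n − dim p] + [dim(p ⊔ q ⊔ r) − dim(q ⊔ r)] + [dim(p ⊓ q) + dim(p ⊓ r) − dim(p ⊓ q ⊓ r)].) -/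
theorem finrank_compl_distribTest_eq
    {E : Type*} [NormedAddCommGroup E] [InnerProductSpace ℂ E]
    [FiniteDimensional ℂ E] (n : ℕ) (hn : Module.finrank ℂ E = n)
    (p q r : Submodule ℂ E) :
    Module.finrank ℂ ↥(distribTest p q r)ᗮ + Module.finrank ℂ ↥p
      + Module.finrank ℂ ↥(q ⊔ r) + Module.finrank ℂ ↥(p ⊓ q ⊓ r)
    = n + Module.finrank ℂ ↥(p ⊔ q ⊔ r) + Module.finrank ℂ ↥(p ⊓ q)
      + Module.finrank ℂ ↥(p ⊓ r) := by
  set a := p ⊔ (q ⊓ r) with ha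
  set b := (p ⊔ q) ⊓ (p ⊔ r) with hb
  have hab : a ≤ b := by
    apply sup_le
    · exact le_inf le_sup_left le_sup_left
    · exact le_inf (le_trans inf_le_left le_sup_right) (le_trans inf_le_right le_sup_right)
  have hba : bᗮ ≤ aᗮ := Submodule.orthogonal_le hab
  have hα : distribTest p q r = aᗮ ⊓ b := by
    rw [distribTest, ← ha, ← hb, sup_eq_right.mpr hab, sup_eq_left.mpr hba, inf_comm]
  have h1 : Module.finrank ℂ a + Module.finrank ℂ ↥(aᗮ ⊓ b) = Module.finrank ℂ b :=
    Submodule.finrank_add_inf_finrank_orthogonal hab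
  have h2 : Module.finrank ℂ ↥(distribTest p q r)
      + Module.finrank ℂ ↥(distribTest p q r)ᗮ = Module.finrank ℂ E :=
    Submodule.finrank_add_finrank_orthogonal _
  rw [hα] at h2
  have e1 : Module.finrank ℂ ↥(p ⊔ (q ⊓ r)) + Module.finrank ℂ ↥(p ⊓ (q ⊓ r))
      = Module.finrank ℂ p + Module.finrank ℂ ↥(q ⊓ r) :=
    Submodule.finrank_sup_add_finrank_inf_eq p (q ⊓ r)
  have e2 : Module.finrank ℂ ↥((p ⊔ q) ⊔ (p ⊔ r)) + Module.finrank ℂ ↥((p ⊔ q) ⊓ (p ⊔ r))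
      = Module.finrank ℂ ↥(p ⊔ q) + Module.finrank ℂ ↥(p ⊔ r) :=
    Submodule.finrank_sup_add_finrank_inf_eq (p ⊔ q) (p ⊔ r)
  have e3 : Module.finrank ℂ ↥(p ⊔ q) + Module.finrank ℂ ↥(p ⊓ q)
      = Module.finrank ℂ p + Module.finrank ℂ q :=
    Submodule.finrank_sup_add_finrank_inf_eq p q
  have e4 : Module.finrank ℂ ↥(p ⊔ r) + Module.finrank ℂ ↥(p ⊓ r)
      = Module.finrank ℂ p + Module.finrank ℂ r :=
    Submodule.finrank_sup_add_finrank_inf_eq p r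
  have e5 : Module.finrank ℂ ↥(q ⊔ r) + Module.finrank ℂ ↥(q ⊓ r)
      = Module.finrank ℂ q + Module.finrank ℂ r :=
    Submodule.finrank_sup_add_finrank_inf_eq q r
  have e6 : (p ⊔ q) ⊔ (p ⊔ r) = p ⊔ q ⊔ r := by
    rw [sup_sup_sup_comm, sup_idem, sup_assoc]
  have e7 : p ⊓ (q ⊓ r) = p ⊓ q ⊓ r := (inf_assoc p q r).symm
  rw [e6, ← hb] at e2
  rw [e7] at e1
  rw [← ha] at e1
  rw [hn] at h2
  rw [hα]
  omega
end

section
/- Let p, q, r be subspaces of ℂ² (i.e., of EuclideanSpace ℂ (Fin 2)). If α(p,q,r) ≠ ⊥, then p, q, r are pairwise distinct one-dimensional subspaces (i.e., dim p = dim q = dim r = 1 and p ≠ q, p ≠ r, q ≠ r). -/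
section Lattice

variable {α : Type*} [Lattice α] {p q r : α}

theorem ne_of_sup_inf_ne_inf_sup (h : p ⊔ (q ⊓ r) ≠ (p ⊔ q) ⊓ (p ⊔ r)) :
    p ≠ q ∧ p ≠ r ∧ q ≠ r := by
  refine ⟨?_, ?_, ?_⟩ <;> rintro rfl <;> apply h
  · simp
  · simp [inf_comm]
  · simp

theorem ne_bot_of_sup_inf_ne_inf_sup [OrderBot α] (h : p ⊔ (q ⊓ r) ≠ (p ⊔ q) ⊓ (p ⊔ r)) :
    p ≠ ⊥ ∧ q ≠ ⊥ ∧ r ≠ ⊥ := by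
  refine ⟨?_, ?_, ?_⟩ <;> rintro rfl <;> apply h <;> simp

theorem ne_top_of_sup_inf_ne_inf_sup [OrderTop α] (h : p ⊔ (q ⊓ r) ≠ (p ⊔ q) ⊓ (p ⊔ r)) :
    p ≠ ⊤ ∧ q ≠ ⊤ ∧ r ≠ ⊤ := by
  refine ⟨?_, ?_, ?_⟩ <;> rintro rfl <;> apply h <;> simp

end Lattice

theorem Submodule.finrank_eq_one_of_ne_bot_of_ne_top {K V : Type*} [DivisionRing K]
    [AddCommGroup V] [Module K V] (hV : Module.finrank K V = 2) {s : Submodule K V}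
    (h_bot : s ≠ ⊥) (h_top : s ≠ ⊤) : Module.finrank K s = 1 := by
  have : FiniteDimensional K V := Module.finite_of_finrank_eq_succ hV
  have h_pos : Module.finrank K s ≠ 0 := Submodule.finrank_eq_zero.not.mpr h_bot
  have h_lt : Module.finrank K s < 2 := hV ▸ Submodule.finrank_lt h_top
  omega

theorem sup_inf_ne_inf_sup_of_distribTest_ne_bot {E : Type*} [NormedAddCommGroup E]
    [InnerProductSpace ℂ E] {p q r : Submodule ℂ E} (h : distribTest p q r ≠ ⊥) :
    p ⊔ (q ⊓ r) ≠ (p ⊔ q) ⊓ (p ⊔ r) := by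
  intro heq
  apply h
  rw [distribTest, heq, sup_idem, sup_idem, Submodule.inf_orthogonal_eq_bot]

theorem distribTest_ne_bot_imp_distinct_lines
    (p q r : Submodule ℂ (EuclideanSpace ℂ (Fin 2)))
    (h : distribTest p q r ≠ ⊥) :
    Module.finrank ℂ p = 1 ∧ Module.finrank ℂ q = 1 ∧ Module.finrank ℂ r = 1 ∧
      p ≠ q ∧ p ≠ r ∧ q ≠ r := by
  have hlaw := sup_inf_ne_inf_sup_of_distribTest_ne_bot h
  obtain ⟨hp, hq, hr⟩ := ne_bot_of_sup_inf_ne_inf_sup hlaw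
  obtain ⟨hp', hq', hr'⟩ := ne_top_of_sup_inf_ne_inf_sup hlaw
  have hdim : Module.finrank ℂ (EuclideanSpace ℂ (Fin 2)) = 2 := finrank_euclideanSpace_fin
  exact ⟨Submodule.finrank_eq_one_of_ne_bot_of_ne_top hdim hp hp',
    Submodule.finrank_eq_one_of_ne_bot_of_ne_top hdim hq hq',
    Submodule.finrank_eq_one_of_ne_bot_of_ne_top hdim hr hr', ne_of_sup_inf_ne_inf_sup hlaw⟩
end

section
/- Let p, q, r be subspaces of ℂ² (i.e., of EuclideanSpace ℂ (Fin 2)). If p, q, r are pairwise distinct one-dimensional subspaces (dim p = dim q = dim r = 1 and p ≠ q, p ≠ r, q ≠ r), then α(p,q,r) = pᗮ; in particular α(p,q,r) ≠ ⊥. -/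
lemma lines_inf_bot (p q : Submodule ℂ (EuclideanSpace ℂ (Fin 2)))
    (hp : Module.finrank ℂ p = 1) (hq : Module.finrank ℂ q = 1) (hpq : p ≠ q) :
    p ⊓ q = ⊥ := by
  by_contra h
  have h1 : 1 ≤ Module.finrank ℂ (p ⊓ q : Submodule ℂ _) :=
    Submodule.one_le_finrank_iff.mpr h
  have e1 : (p ⊓ q : Submodule ℂ _) = p :=
    Submodule.eq_of_le_of_finrank_le inf_le_left (hp ▸ h1)
  have e2 : (p ⊓ q : Submodule ℂ _) = q :=
    Submodule.eq_of_le_of_finrank_le inf_le_right (hq ▸ h1)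
  exact hpq (e1 ▸ e2)

lemma lines_sup_top (p q : Submodule ℂ (EuclideanSpace ℂ (Fin 2)))
    (hp : Module.finrank ℂ p = 1) (hq : Module.finrank ℂ q = 1) (hpq : p ≠ q) :
    p ⊔ q = ⊤ := by
  have hinf := lines_inf_bot p q hp hq hpq
  have h := Submodule.finrank_sup_add_finrank_inf_eq p q
  rw [hinf, hp, hq] at h
  simp at h
  apply Submodule.eq_top_of_finrank_eq
  simp [h]

theorem distribTest_eq_compl_of_distinct_lines
    (p q r : Submodule ℂ (EuclideanSpace ℂ (Fin 2)))
    (hp : Module.finrank ℂ p = 1) (hq : Module.finrank ℂ q = 1)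
    (hr : Module.finrank ℂ r = 1)
    (hpq : p ≠ q) (hpr : p ≠ r) (hqr : q ≠ r) :
    distribTest p q r = pᗮ ∧ distribTest p q r ≠ ⊥ := by
  have hqr' : q ⊓ r = ⊥ := lines_inf_bot q r hq hr hqr
  have hpq' : p ⊔ q = ⊤ := lines_sup_top p q hp hq hpq
  have hpr' : p ⊔ r = ⊤ := lines_sup_top p r hp hr hpr
  have hmain : distribTest p q r = pᗮ := by
    simp [distribTest, hqr', hpq', hpr']
  refine ⟨hmain, ?_⟩
  rw [hmain]
  intro hbot
  have : p = ⊤ := Submodule.orthogonal_eq_bot_iff.mp hbot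
  rw [this] at hp
  simp [finrank_euclideanSpace_fin] at hp
end

section
/- For any subspaces p, q, r of ℂ² (i.e., of EuclideanSpace ℂ (Fin 2)), either α(p,q,r) = ⊥ or α(p,q,r) = pᗮ. -/
open Module

private lemma euc_finrank : finrank ℂ (EuclideanSpace ℂ (Fin 2)) = 2 := by simp

private lemma sub_trichotomy (s : Submodule ℂ (EuclideanSpace ℂ (Fin 2))) :
    s = ⊥ ∨ s = ⊤ ∨ finrank ℂ s = 1 := by
  have h2 : finrank ℂ s ≤ 2 := by
    have := Submodule.finrank_le s
    rwa [euc_finrank] at this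
  interval_cases h : finrank ℂ s
  · exact Or.inl (Submodule.finrank_eq_zero.mp h)
  · exact Or.inr (Or.inr rfl)
  · exact Or.inr (Or.inl (Submodule.eq_top_of_finrank_eq (h.trans euc_finrank.symm)))

private lemma line_cases {x y : Submodule ℂ (EuclideanSpace ℂ (Fin 2))}
    (hx : finrank ℂ x = 1) (hy : finrank ℂ y = 1) (hxy : x ≠ y) :
    x ⊓ y = ⊥ ∧ x ⊔ y = ⊤ := by
  have hbot : x ⊓ y = ⊥ := by
    by_contra hb
    have h1 : 1 ≤ finrank ℂ (x ⊓ y : Submodule ℂ _) :=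
      Nat.one_le_iff_ne_zero.mpr (fun h0 => hb (Submodule.finrank_eq_zero.mp h0))
    have hxe : x ⊓ y = x := Submodule.eq_of_le_of_finrank_le inf_le_left (hx ▸ h1)
    have hye : x ⊓ y = y := Submodule.eq_of_le_of_finrank_le inf_le_right (hy ▸ h1)
    exact hxy (hxe ▸ hye)
  refine ⟨hbot, ?_⟩
  have := Submodule.finrank_sup_add_finrank_inf_eq x y
  rw [hbot, hx, hy] at this
  simp only [finrank_bot, add_zero] at this
  exact Submodule.eq_top_of_finrank_eq (this.trans euc_finrank.symm)

theorem distribTest_eq_bot_or_eq_compl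
    (p q r : Submodule ℂ (EuclideanSpace ℂ (Fin 2))) :
    distribTest p q r = ⊥ ∨ distribTest p q r = pᗮ := by
  set a := p ⊔ (q ⊓ r) with ha
  set b := (p ⊔ q) ⊓ (p ⊔ r) with hb
  have hab : a ≤ b :=
    sup_le (le_inf le_sup_left le_sup_left)
      (le_inf (inf_le_left.trans le_sup_right) (inf_le_right.trans le_sup_right))
  have hd : distribTest p q r = b ⊓ aᗮ := by
    rw [distribTest, ← ha, ← hb, sup_eq_right.mpr hab,
      sup_eq_left.mpr (Submodule.orthogonal_le hab)]
  by_cases heq : a = b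
  · left
    rw [hd, ← heq]
    exact (Submodule.orthogonal_disjoint a).eq_bot
  · -- show a = p and b = ⊤
    have key : a = p ∧ b = ⊤ := by
      rcases sub_trichotomy p with hp | hp | hp
      · exfalso; apply heq; rw [ha, hb, hp]; simp
      · exfalso; apply heq
        have : a = ⊤ := top_le_iff.mp (hp ▸ le_sup_left)
        rw [this, eq_comm, eq_top_iff, ← this]; exact hab
      rcases sub_trichotomy q with hq | hq | hq
      · exfalso; apply heq; rw [ha, hb, hq]; simp
      · exfalso; apply heq; rw [ha, hb, hq]; simp
      rcases sub_trichotomy r with hr | hr | hr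
      · exfalso; apply heq; rw [ha, hb, hr]; simp
      · exfalso; apply heq; rw [ha, hb, hr]; simp
      by_cases hpq : p = q
      · exfalso; apply heq; rw [ha, hb, hpq]
        simp [inf_comm, sup_comm, inf_sup_self, sup_inf_self]
      by_cases hpr : p = r
      · exfalso; apply heq; rw [ha, hb, hpr]
        simp [inf_comm, sup_comm, inf_sup_self, sup_inf_self]
      by_cases hqr : q = r
      · exfalso; apply heq; rw [ha, hb, hqr, inf_idem, inf_idem]
      obtain ⟨hqr_bot, -⟩ := line_cases hq hr hqr
      obtain ⟨-, hpq_top⟩ := line_cases hp hq hpq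
      obtain ⟨-, hpr_top⟩ := line_cases hp hr hpr
      constructor
      · rw [ha, hqr_bot, sup_bot_eq]
      · rw [hb, hpq_top, hpr_top, inf_idem]
    right
    rw [hd, key.1, key.2, top_inf_eq]
end

section
/- For all subspaces p, q, r, s of ℂ² (i.e., of EuclideanSpace ℂ (Fin 2)), β(p,q,r,s) = ⊥, where β(p,q,r,s) = α(α(p,q,r), α(p,q,r)ᗮ ⊓ pᗮ, s). -/
/-!
Write `a = p ⊔ (q ⊓ r) ≤ b = (p ⊔ q) ⊓ (p ⊔ r)`. The test `α(p,q,r)` vanishes when `a = b`, and it is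
`aᗮ` when `b = ⊤`. In `ℂ²` every subspace `p` is `⊥`, `⊤` or a line; in the first two cases `a = b`,
and for a line both `a` and `b` lie in `{p, ⊤}`, so `α(p,q,r)` is either `⊥` or `pᗮ`. In the
outer test `α(x, xᗮ ⊓ pᗮ, s)` the first argument is then `⊥`, or the second one is `p ⊓ pᗮ = ⊥`,
and a test with a trivial first or second argument vanishes.
-/

open Module

theorem Submodule.eq_bot_or_eq_top_or_isCoatom_of_finrank_eq_two {K V : Type*} [DivisionRing K]
    [AddCommGroup V] [Module K V] [FiniteDimensional K V] (hV : finrank K V = 2)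
    (S : Submodule K V) : S = ⊥ ∨ S = ⊤ ∨ IsCoatom S := by
  have hle : finrank K S ≤ 2 := hV ▸ S.finrank_le
  interval_cases h : finrank K S
  · exact .inl (Submodule.finrank_eq_zero.mp h)
  · refine .inr (.inr ⟨fun hS => by rw [hS, finrank_top, hV] at h; omega, fun T hST => ?_⟩)
    have hT : 1 < finrank K T := h ▸ Submodule.finrank_lt_finrank_of_lt hST
    exact Submodule.eq_top_of_finrank_eq (le_antisymm T.finrank_le (hV ▸ hT))
  · exact .inr (.inl (Submodule.eq_top_of_finrank_eq (h.trans hV.symm)))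

section distribTest

variable {E : Type*} [NormedAddCommGroup E] [InnerProductSpace ℂ E]

theorem distribTest_eq_bot_of_eq {p q r : Submodule ℂ E}
    (h : p ⊔ (q ⊓ r) = (p ⊔ q) ⊓ (p ⊔ r)) : distribTest p q r = ⊥ := by
  rw [distribTest, ← h, sup_idem, sup_idem, Submodule.inf_orthogonal_eq_bot]

theorem distribTest_eq_orthogonal_of_eq_top {p q r : Submodule ℂ E}
    (h : (p ⊔ q) ⊓ (p ⊔ r) = ⊤) : distribTest p q r = (p ⊔ (q ⊓ r))ᗮ := by
  simp [distribTest, h]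

theorem distribTest_bot_left (q r : Submodule ℂ E) : distribTest ⊥ q r = ⊥ :=
  distribTest_eq_bot_of_eq (by simp only [bot_sup_eq])

theorem distribTest_bot_middle (p r : Submodule ℂ E) : distribTest p ⊥ r = ⊥ :=
  distribTest_eq_bot_of_eq (by simp)

theorem distribTest_top_left (q r : Submodule ℂ E) : distribTest ⊤ q r = ⊥ :=
  distribTest_eq_bot_of_eq (by simp only [top_sup_eq, inf_idem])

theorem distribTest_eq_bot_or_eq_orthogonal_of_isCoatom {p : Submodule ℂ E} (hp : IsCoatom p)
    (q r : Submodule ℂ E) : distribTest p q r = ⊥ ∨ distribTest p q r = pᗮ := by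
  have hab : p ⊔ (q ⊓ r) ≤ (p ⊔ q) ⊓ (p ⊔ r) :=
    le_inf (sup_le_sup_left inf_le_left p) (sup_le_sup_left inf_le_right p)
  rcases hp.le_iff.mp (le_sup_left : p ≤ p ⊔ (q ⊓ r)) with ha | ha <;>
    rcases hp.le_iff.mp (le_inf le_sup_left le_sup_left : p ≤ (p ⊔ q) ⊓ (p ⊔ r)) with hb | hb
  · exact .inl (distribTest_eq_bot_of_eq (ha.trans hb.symm))
  · exact absurd (hb ▸ ha ▸ hab) (not_le_of_gt hp.lt_top)
  · exact .inr (by rw [distribTest_eq_orthogonal_of_eq_top hb, ha])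
  · exact .inl (distribTest_eq_bot_of_eq (ha.trans hb.symm))

end distribTest

theorem distribTest_eq_bot_or_eq_orthogonal_of_finrank_eq_two {E : Type*} [NormedAddCommGroup E]
    [InnerProductSpace ℂ E] [FiniteDimensional ℂ E] (hE : finrank ℂ E = 2)
    (p q r : Submodule ℂ E) : distribTest p q r = ⊥ ∨ distribTest p q r = pᗮ := by
  rcases p.eq_bot_or_eq_top_or_isCoatom_of_finrank_eq_two hE with rfl | rfl | hp
  · exact .inl (distribTest_bot_left q r)
  · exact .inl (distribTest_top_left q r)
  · exact distribTest_eq_bot_or_eq_orthogonal_of_isCoatom hp q r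

theorem beta_eq_bot_on_C2
    (p q r s : Submodule ℂ (EuclideanSpace ℂ (Fin 2))) :
    distribTest (distribTest p q r) ((distribTest p q r)ᗮ ⊓ pᗮ) s = ⊥ := by
  rcases distribTest_eq_bot_or_eq_orthogonal_of_finrank_eq_two finrank_euclideanSpace_fin p q r
    with h | h
  · rw [h]
    exact distribTest_bot_left _ _
  · rw [h, inf_comm, Submodule.inf_orthogonal_eq_bot]
    exact distribTest_bot_middle _ _
end

section
/- Let e₁, e₂, e₃, e₄ be the standard orthonormal basis of ℂ⁴ (i.e., of EuclideanSpace ℂ (Fin 4)), and set p = span{e₁, e₂}, q = pᗮ, r = span{e₁, e₂ + e₃}, s = span{e₁, e₃ + e₄}. Then β(p,q,r,s) = span{e₄}; in particular β(p,q,r,s) ≠ ⊥, so there exist subspaces p, q, r, s of ℂ⁴ with β(p,q,r,s) ≠ ⊥. -/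
/-- The formula `β(p,q,r,s) = α(α(p,q,r), α(p,q,r)ᗮ ⊓ pᗮ, s)`. -/
noncomputable def betaTest {E : Type*} [NormedAddCommGroup E] [InnerProductSpace ℂ E]
    (p q r s : Submodule ℂ E) : Submodule ℂ E :=
  distribTest (distribTest p q r) ((distribTest p q r)ᗮ ⊓ pᗮ) s

/-!
When `q ⊓ r ≤ p` we have `a = p ≤ b`, so `α(p,q,r)` collapses to `b ⊓ pᗮ`; for `q = pᗮ` (and `p`
complete) moreover `b = p ⊔ r`. Both applications of `α` in `β(p,q,r,s)` are of this kind. In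
coordinates (indices `0, …, 3`), `α(p,pᗮ,r) = (p ⊔ r) ⊓ pᗮ = span{e 2}`, hence
`α(p,pᗮ,r)ᗮ ⊓ pᗮ = span{e 3}`, and since `span{e 3} ⊓ s = ⊥`,
`β = (span{e 2, e 3} ⊓ (span{e 2} ⊔ s)) ⊓ span{e 2}ᗮ = span{e 3}`.
-/

open Submodule
open scoped InnerProductSpace

theorem Submodule.mem_orthogonal_span_iff {𝕜 E : Type*} [RCLike 𝕜] [NormedAddCommGroup E]
    [InnerProductSpace 𝕜 E] {S : Set E} {v : E} :
    v ∈ (span 𝕜 S)ᗮ ↔ ∀ u ∈ S, ⟪u, v⟫_𝕜 = 0 := by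
  rw [← span_singleton_le_iff_mem, ← isOrtho_iff_le, isOrtho_comm, isOrtho_span]
  simp

section DistribTest

variable {E : Type*} [NormedAddCommGroup E] [InnerProductSpace ℂ E]

theorem distribTest_of_inf_le {p q r : Submodule ℂ E} (h : q ⊓ r ≤ p) :
    distribTest p q r = (p ⊔ q) ⊓ (p ⊔ r) ⊓ pᗮ := by
  have hle : p ≤ (p ⊔ q) ⊓ (p ⊔ r) := le_inf le_sup_left le_sup_left
  rw [distribTest, sup_eq_left.2 h, sup_eq_right.2 hle, sup_eq_left.2 (orthogonal_le hle)]

theorem distribTest_orthogonal_of_inf_eq_bot {p r : Submodule ℂ E} [p.HasOrthogonalProjection]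
    (h : pᗮ ⊓ r = ⊥) : distribTest p pᗮ r = (p ⊔ r) ⊓ pᗮ := by
  rw [distribTest_of_inf_le (h.trans_le bot_le), sup_orthogonal_of_hasOrthogonalProjection,
    top_inf_eq]

end DistribTest

namespace C4

local notation "V" => EuclideanSpace ℂ (Fin 4)

noncomputable abbrev e (i : Fin 4) : V := EuclideanSpace.single i 1

theorem mem_span_e0_e1_iff {x : V} : x ∈ span ℂ {e 0, e 1} ↔ x 2 = 0 ∧ x 3 = 0 := by
  rw [mem_span_pair]
  constructor
  · rintro ⟨a, b, rfl⟩; simp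
  · rintro ⟨h2, h3⟩
    exact ⟨x 0, x 1, by ext j; fin_cases j <;> simp [h2, h3]⟩

theorem mem_orthogonal_span_e0_e1_iff {x : V} :
    x ∈ (span ℂ {e 0, e 1})ᗮ ↔ x 0 = 0 ∧ x 1 = 0 := by
  simp [mem_orthogonal_span_iff, EuclideanSpace.inner_single_left]

theorem mem_span_e0_e1_add_e2_iff {x : V} :
    x ∈ span ℂ {e 0, e 1 + e 2} ↔ x 1 = x 2 ∧ x 3 = 0 := by
  rw [mem_span_pair]
  constructor
  · rintro ⟨a, b, rfl⟩; simp
  · rintro ⟨h12, h3⟩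
    exact ⟨x 0, x 1, by ext j; fin_cases j <;> simp [h12, h3]⟩

theorem mem_span_e0_e2_add_e3_iff {x : V} :
    x ∈ span ℂ {e 0, e 2 + e 3} ↔ x 1 = 0 ∧ x 2 = x 3 := by
  rw [mem_span_pair]
  constructor
  · rintro ⟨a, b, rfl⟩; simp
  · rintro ⟨h1, h23⟩
    exact ⟨x 0, x 2, by ext j; fin_cases j <;> simp [h1, h23]⟩

theorem mem_span_e2_iff {x : V} : x ∈ span ℂ {e 2} ↔ x 0 = 0 ∧ x 1 = 0 ∧ x 3 = 0 := by
  rw [mem_span_singleton]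
  constructor
  · rintro ⟨a, rfl⟩; simp
  · rintro ⟨h0, h1, h3⟩
    exact ⟨x 2, by ext j; fin_cases j <;> simp [h0, h1, h3]⟩

theorem mem_orthogonal_span_e2_iff {x : V} : x ∈ (span ℂ {e 2})ᗮ ↔ x 2 = 0 := by
  simp [mem_orthogonal_span_iff, EuclideanSpace.inner_single_left]

theorem mem_span_e3_iff {x : V} : x ∈ span ℂ {e 3} ↔ x 0 = 0 ∧ x 1 = 0 ∧ x 2 = 0 := by
  rw [mem_span_singleton]
  constructor
  · rintro ⟨a, rfl⟩; simp
  · rintro ⟨h0, h1, h2⟩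
    exact ⟨x 3, by ext j; fin_cases j <;> simp [h0, h1, h2]⟩

theorem mem_span_e2_e3_iff {x : V} : x ∈ span ℂ {e 2, e 3} ↔ x 0 = 0 ∧ x 1 = 0 := by
  rw [mem_span_pair]
  constructor
  · rintro ⟨a, b, rfl⟩; simp
  · rintro ⟨h0, h1⟩
    exact ⟨x 2, x 3, by ext j; fin_cases j <;> simp [h0, h1]⟩

theorem mem_span_e0_e1_sup_span_e0_e1_add_e2_iff {x : V} :
    x ∈ span ℂ {e 0, e 1} ⊔ span ℂ {e 0, e 1 + e 2} ↔ x 3 = 0 := by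
  rw [mem_sup]
  constructor
  · rintro ⟨y, hy, z, hz, rfl⟩
    rw [mem_span_e0_e1_iff] at hy
    rw [mem_span_e0_e1_add_e2_iff] at hz
    simp [hy.2, hz.2]
  · intro h3
    refine ⟨x - x 2 • (e 1 + e 2), ?_, x 2 • (e 1 + e 2), ?_, sub_add_cancel _ _⟩
    · rw [mem_span_e0_e1_iff]; simp [h3]
    · exact smul_mem _ _ (subset_span (by simp))

theorem mem_span_e2_sup_span_e0_e2_add_e3_iff {x : V} :
    x ∈ span ℂ {e 2} ⊔ span ℂ {e 0, e 2 + e 3} ↔ x 1 = 0 := by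
  rw [mem_sup]
  constructor
  · rintro ⟨y, hy, z, hz, rfl⟩
    rw [mem_span_e2_iff] at hy
    rw [mem_span_e0_e2_add_e3_iff] at hz
    simp [hy.2.1, hz.1]
  · intro h1
    refine ⟨x - (x 0 • e 0 + x 3 • (e 2 + e 3)), ?_, x 0 • e 0 + x 3 • (e 2 + e 3), ?_,
      sub_add_cancel _ _⟩
    · rw [mem_span_e2_iff]; simp [h1]
    · exact mem_span_pair.2 ⟨x 0, x 3, rfl⟩

theorem distribTest_span_e0_e1_eq_span_e2 :
    distribTest (span ℂ {e 0, e 1}) (span ℂ {e 0, e 1})ᗮ (span ℂ {e 0, e 1 + e 2}) =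
      span ℂ {e 2} := by
  have hqr : (span ℂ {e 0, e 1})ᗮ ⊓ span ℂ {e 0, e 1 + e 2} = ⊥ := by
    refine eq_bot_iff.2 fun x hx ↦ ?_
    rw [mem_inf, mem_orthogonal_span_e0_e1_iff, mem_span_e0_e1_add_e2_iff] at hx
    obtain ⟨⟨h0, h1⟩, h12, h3⟩ := hx
    rw [mem_bot]
    ext j; fin_cases j <;> simp [h0, h1, ← h12, h3]
  rw [distribTest_orthogonal_of_inf_eq_bot hqr]
  ext x
  rw [mem_inf, mem_span_e0_e1_sup_span_e0_e1_add_e2_iff, mem_orthogonal_span_e0_e1_iff,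
    mem_span_e2_iff]
  tauto

theorem orthogonal_span_e2_inf_orthogonal_span_e0_e1 :
    (span ℂ {e 2})ᗮ ⊓ (span ℂ {e 0, e 1})ᗮ = span ℂ {e 3} := by
  ext x
  rw [mem_inf, mem_orthogonal_span_e2_iff, mem_orthogonal_span_e0_e1_iff, mem_span_e3_iff]
  tauto

theorem distribTest_span_e2_eq_span_e3 :
    distribTest (span ℂ {e 2}) (span ℂ {e 3}) (span ℂ {e 0, e 2 + e 3}) = span ℂ {e 3} := by
  have hus : span ℂ {e 3} ⊓ span ℂ {e 0, e 2 + e 3} ≤ span ℂ {e 2} := by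
    intro x hx
    rw [mem_inf, mem_span_e3_iff, mem_span_e0_e2_add_e3_iff] at hx
    obtain ⟨⟨h0, h1, h2⟩, -, h23⟩ := hx
    exact mem_span_e2_iff.2 ⟨h0, h1, h23.symm.trans h2⟩
  have htu : span ℂ {e 2} ⊔ span ℂ {e 3} = span ℂ {e 2, e 3} := by
    rw [← span_union, Set.singleton_union]
  rw [distribTest_of_inf_le hus, htu]
  ext x
  rw [mem_inf, mem_inf, mem_span_e2_e3_iff, mem_span_e2_sup_span_e0_e2_add_e3_iff,
    mem_orthogonal_span_e2_iff, mem_span_e3_iff]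
  tauto

theorem betaTest_eq :
    betaTest (span ℂ {e 0, e 1}) (span ℂ {e 0, e 1})ᗮ (span ℂ {e 0, e 1 + e 2})
      (span ℂ {e 0, e 2 + e 3}) = span ℂ {e 3} := by
  rw [betaTest, distribTest_span_e0_e1_eq_span_e2, orthogonal_span_e2_inf_orthogonal_span_e0_e1,
    distribTest_span_e2_eq_span_e3]

theorem betaTest_ne_bot :
    betaTest (span ℂ {e 0, e 1}) (span ℂ {e 0, e 1})ᗮ (span ℂ {e 0, e 1 + e 2})
      (span ℂ {e 0, e 2 + e 3}) ≠ ⊥ := by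
  rw [betaTest_eq]
  simp

end C4

theorem beta_ne_bot_on_C4 :
    (let e : Fin 4 → EuclideanSpace ℂ (Fin 4) := fun i => EuclideanSpace.single i (1 : ℂ)
     let p : Submodule ℂ (EuclideanSpace ℂ (Fin 4)) := Submodule.span ℂ {e 0, e 1}
     let q : Submodule ℂ (EuclideanSpace ℂ (Fin 4)) := pᗮ
     let r : Submodule ℂ (EuclideanSpace ℂ (Fin 4)) := Submodule.span ℂ {e 0, e 1 + e 2}
     let s : Submodule ℂ (EuclideanSpace ℂ (Fin 4)) := Submodule.span ℂ {e 0, e 2 + e 3}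
     betaTest p q r s = Submodule.span ℂ {e 3} ∧ betaTest p q r s ≠ ⊥) ∧
    ∃ p q r s : Submodule ℂ (EuclideanSpace ℂ (Fin 4)), betaTest p q r s ≠ ⊥ := by
  exact ⟨⟨C4.betaTest_eq, C4.betaTest_ne_bot⟩, _, _, _, _, C4.betaTest_ne_bot⟩
end

section
/- For every natural number i ≥ 0, there exist subspaces p₁, q₁, r₁, …, p_{i+1}, q_{i+1}, r_{i+1} of ℂ^{2^{i+1}} (i.e., of EuclideanSpace ℂ (Fin (2^{i+1}))) such that the iterated restricted distributivity test formula satisfies dim(α^{i+1}(p_{i+1},q_{i+1},r_{i+1})) = 1; in particular α^{i+1} is not identically ⊥ on ℂ^{2^{i+1}}. -/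
/-- The restriction `α|_γ(p,q,r)` of the distributivity test formula to `γ`:
write `α` in negation normal form `((p ⊔ q) ⊓ (p ⊔ r)) ⊓ (pᗮ ⊓ (qᗮ ⊔ rᗮ))` and
replace each variable `x` by `x ⊓ γ` and each negated variable `xᗮ` by `xᗮ ⊓ γ`. -/
noncomputable def distribTestRes {E : Type*} [NormedAddCommGroup E] [InnerProductSpace ℂ E]
    (γ p q r : Submodule ℂ E) : Submodule ℂ E :=
  (((p ⊓ γ) ⊔ (q ⊓ γ)) ⊓ ((p ⊓ γ) ⊔ (r ⊓ γ))) ⊓ ((pᗮ ⊓ γ) ⊓ ((qᗮ ⊓ γ) ⊔ (rᗮ ⊓ γ)))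

/-- The iterated restricted distributivity test formula:
`distribTestIter p q r m` is `α^(m+1)(p (m+1), q (m+1), r (m+1))`, where
`α¹(p₁,q₁,r₁) = α(p₁,q₁,r₁)` and `αᵐ(pₘ,qₘ,rₘ) = α|_(α^(m-1))(pₘ,qₘ,rₘ)`.
The variables `pⱼ, qⱼ, rⱼ` (for `1 ≤ j ≤ m+1`) are given as `p j, q j, r j`. -/
noncomputable def distribTestIter {E : Type*} [NormedAddCommGroup E] [InnerProductSpace ℂ E]
    (p q r : ℕ → Submodule ℂ E) : ℕ → Submodule ℂ E
  | 0 => distribTest (p 1) (q 1) (r 1)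
  | (m + 1) => distribTestRes (distribTestIter p q r m) (p (m + 2)) (q (m + 2)) (r (m + 2))

/-! For complementary subspaces `γᗮ, γ` of a space of dimension `2n` and the graph `Γ` of a
linear isomorphism `γᗮ ≃ γ`, which is complementary to both, `α(γᗮ, γ, Γ) = γ`. For subspaces of
`γ` the restriction `α|_γ` is `α` computed inside `γ`, and later restrictions commute with the
inclusion of `γ`. Hence `α^(m+1)` on a space of dimension `2n` can take the value of `α^m` on one of
dimension `n`; halving `2^(i+1)` down to `1` gives a line. -/

open Module Submodule

theorem Submodule.exists_finrank_eq_of_le {K V : Type*} [DivisionRing K] [AddCommGroup V]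
    [Module K V] [FiniteDimensional K V] {k : ℕ} (h : k ≤ finrank K V) :
    ∃ W : Submodule K V, finrank K W = k := by
  refine ⟨span K (Set.range (finBasis K V ∘ Fin.castLE h)), ?_⟩
  rw [finrank_span_eq_card ((finBasis K V).linearIndependent.comp _ (Fin.castLE_injective h))]
  simp

section Graph

variable {R M : Type*} [Ring R] [AddCommGroup M] [Module R M] {p q : Submodule R M}

theorem Submodule.disjoint_range_subtype_add (hpq : Disjoint p q) (f : p →ₗ[R] q) :
    Disjoint q (LinearMap.range (p.subtype + q.subtype ∘ₗ f)) := by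
  rw [disjoint_def]
  rintro x hxq ⟨y, rfl⟩
  have hyq : (y : M) ∈ q := by
    simpa using q.sub_mem hxq (f y).2
  have hy : y = 0 := Subtype.ext ((disjoint_def.1 hpq) y y.2 hyq)
  simp [hy]

theorem Submodule.codisjoint_range_subtype_add (hpq : Codisjoint p q) {f : p →ₗ[R] q}
    (hf : Function.Surjective f) :
    Codisjoint p (LinearMap.range (p.subtype + q.subtype ∘ₗ f)) := by
  refine codisjoint_iff.2 (top_unique (hpq.eq_top ▸ sup_le le_sup_left fun v hv => ?_))
  obtain ⟨y, hy⟩ := hf ⟨v, hv⟩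
  have hv_eq : v = (p.subtype + q.subtype ∘ₗ f) y - y := by simp [hy]
  rw [hv_eq]
  exact sub_mem (mem_sup_right ⟨y, rfl⟩) (mem_sup_left y.2)

end Graph

section Orthogonal

variable {𝕜 E : Type*} [RCLike 𝕜] [NormedAddCommGroup E] [InnerProductSpace 𝕜 E]

theorem Submodule.orthogonal_inf [FiniteDimensional 𝕜 E] (q r : Submodule 𝕜 E) :
    (q ⊓ r)ᗮ = qᗮ ⊔ rᗮ := by
  conv_lhs => rw [← orthogonal_orthogonal q, ← orthogonal_orthogonal r, inf_orthogonal,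
    orthogonal_orthogonal]

theorem Submodule.map_subtype_orthogonal (γ : Submodule 𝕜 E) (S : Submodule 𝕜 γ) :
    map γ.subtype Sᗮ = (map γ.subtype S)ᗮ ⊓ γ := by
  ext x
  simp only [mem_map, mem_inf, mem_orthogonal]
  constructor
  · rintro ⟨y, hy, rfl⟩
    exact ⟨fun _ ⟨v, hv, hu⟩ => hu ▸ hy v hv, y.2⟩
  · rintro ⟨hx, hxγ⟩
    exact ⟨⟨x, hxγ⟩, fun v hv => hx _ ⟨v, hv, rfl⟩, rfl⟩

end Orthogonal

section DistribTest

variable {E : Type*} [NormedAddCommGroup E] [InnerProductSpace ℂ E]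

theorem distribTest_eq_orthogonal {p q r : Submodule ℂ E} (hpq : Codisjoint p q)
    (hpr : Codisjoint p r) (hqr : Disjoint q r) : distribTest p q r = pᗮ := by
  rw [distribTest, hqr.eq_bot, hpq.eq_top, hpr.eq_top]
  simp

theorem distribTest_eq_nnf [FiniteDimensional ℂ E] (p q r : Submodule ℂ E) :
    distribTest p q r = ((p ⊔ q) ⊓ (p ⊔ r)) ⊓ (pᗮ ⊓ (qᗮ ⊔ rᗮ)) := by
  have hab : p ⊔ (q ⊓ r) ≤ (p ⊔ q) ⊓ (p ⊔ r) :=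
    sup_le (le_inf le_sup_left le_sup_left) (inf_le_inf le_sup_right le_sup_right)
  rw [distribTest, sup_eq_right.2 hab, sup_eq_left.2 (orthogonal_le hab), ← inf_orthogonal,
    orthogonal_inf]

theorem distribTestRes_self_map_subtype [FiniteDimensional ℂ E] (γ : Submodule ℂ E)
    (P Q R : Submodule ℂ γ) :
    distribTestRes γ (map γ.subtype P) (map γ.subtype Q) (map γ.subtype R) =
      map γ.subtype (distribTest P Q R) := by
  have hle (S : Submodule ℂ γ) : map γ.subtype S ⊓ γ = map γ.subtype S :=
    inf_eq_left.2 (map_subtype_le γ S)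
  simp only [distribTest_eq_nnf, distribTestRes, hle, ← map_subtype_orthogonal,
    ← Submodule.map_sup, ← Submodule.map_inf _ γ.injective_subtype]

theorem distribTestRes_map_subtype (γ : Submodule ℂ E) (γ' P Q R : Submodule ℂ γ) :
    distribTestRes (map γ.subtype γ') (map γ.subtype P) (map γ.subtype Q) (map γ.subtype R) =
      map γ.subtype (distribTestRes γ' P Q R) := by
  have horth (S : Submodule ℂ γ) :
      (map γ.subtype S)ᗮ ⊓ map γ.subtype γ' = map γ.subtype (Sᗮ ⊓ γ') := by
    rw [map_inf _ γ.injective_subtype, map_subtype_orthogonal, inf_assoc,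
      inf_eq_right.2 (map_subtype_le γ γ')]
  simp only [distribTestRes, horth, ← Submodule.map_inf _ γ.injective_subtype,
    ← Submodule.map_sup]

theorem distribTestIter_succ_eq_map [FiniteDimensional ℂ E] {γ : Submodule ℂ E}
    {p q r : ℕ → Submodule ℂ E} {P Q R : ℕ → Submodule ℂ γ} (h₀ : distribTestIter p q r 0 = γ)
    (hp : ∀ j, p (j + 2) = map γ.subtype (P (j + 1)))
    (hq : ∀ j, q (j + 2) = map γ.subtype (Q (j + 1)))
    (hr : ∀ j, r (j + 2) = map γ.subtype (R (j + 1))) (k : ℕ) :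
    distribTestIter p q r (k + 1) = map γ.subtype (distribTestIter P Q R k) := by
  induction k with
  | zero =>
    rw [distribTestIter, distribTestIter, h₀, hp, hq, hr]
    exact distribTestRes_self_map_subtype γ _ _ _
  | succ k ih =>
    rw [distribTestIter, ih, hp, hq, hr]
    exact distribTestRes_map_subtype γ _ _ _ _

end DistribTest

section Construction

variable {E : Type*} [NormedAddCommGroup E] [InnerProductSpace ℂ E] [FiniteDimensional ℂ E]

theorem exists_distribTest_eq_of_finrank_eq_two_mul {n : ℕ} (hE : finrank ℂ E = 2 * n) :
    ∃ γ : Submodule ℂ E, finrank ℂ γ = n ∧ ∃ p q r : Submodule ℂ E, distribTest p q r = γ := by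
  obtain ⟨γ, hγ⟩ := exists_finrank_eq_of_le (K := ℂ) (by omega : n ≤ finrank ℂ E)
  have hγ_orth : finrank ℂ γᗮ = finrank ℂ γ := by
    have := finrank_add_finrank_orthogonal γ
    omega
  obtain ⟨f⟩ : Nonempty (γᗮ ≃ₗ[ℂ] γ) :=
    FiniteDimensional.nonempty_linearEquiv_of_finrank_eq hγ_orth
  have hcompl : IsCompl γᗮ γ := γ.isCompl_orthogonal.symm
  refine ⟨γ, hγ, γᗮ, γ, LinearMap.range (γᗮ.subtype + γ.subtype ∘ₗ f.toLinearMap), ?_⟩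
  rw [distribTest_eq_orthogonal hcompl.codisjoint
    (codisjoint_range_subtype_add hcompl.codisjoint (f := f.toLinearMap) f.surjective)
    (disjoint_range_subtype_add hcompl.disjoint f.toLinearMap), orthogonal_orthogonal]

theorem exists_distribTestIter_finrank_eq_one_of_finrank_eq {m : ℕ}
    (hE : finrank ℂ E = 2 ^ (m + 1)) :
    ∃ p q r : ℕ → Submodule ℂ E, finrank ℂ (distribTestIter p q r m) = 1 := by
  induction m generalizing E with
  | zero =>
    obtain ⟨γ, hγ, p, q, r, hpqr⟩ := exists_distribTest_eq_of_finrank_eq_two_mul (n := 1) hE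
    exact ⟨fun _ => p, fun _ => q, fun _ => r, by rw [distribTestIter, hpqr, hγ]⟩
  | succ m ih =>
    obtain ⟨γ, hγ, p₁, q₁, r₁, h₁⟩ :=
      exists_distribTest_eq_of_finrank_eq_two_mul (n := 2 ^ (m + 1)) (by rw [hE, pow_succ'])
    obtain ⟨P, Q, R, hPQR⟩ := ih hγ
    let shift (x : Submodule ℂ E) (X : ℕ → Submodule ℂ γ) : ℕ → Submodule ℂ E
      | j + 2 => map γ.subtype (X (j + 1))
      | _ => x
    have h₀ : distribTestIter (shift p₁ P) (shift q₁ Q) (shift r₁ R) 0 = γ := h₁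
    refine ⟨shift p₁ P, shift q₁ Q, shift r₁ R, ?_⟩
    rw [distribTestIter_succ_eq_map h₀ (fun _ => rfl) (fun _ => rfl) (fun _ => rfl),
      finrank_map_subtype_eq, hPQR]

end Construction

theorem exists_distribTestIter_finrank_eq_one (i : ℕ) :
    ∃ p q r : ℕ → Submodule ℂ (EuclideanSpace ℂ (Fin (2 ^ (i + 1)))),
      Module.finrank ℂ (distribTestIter p q r i) = 1 ∧
        distribTestIter p q r i ≠ ⊥ := by
  obtain ⟨p, q, r, h⟩ := exists_distribTestIter_finrank_eq_one_of_finrank_eq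
    (E := EuclideanSpace ℂ (Fin (2 ^ (i + 1)))) (m := i) (by simp)
  exact ⟨p, q, r, h, fun hbot => by rw [hbot, finrank_bot] at h; exact zero_ne_one h⟩
end

section
/- Let W be a finite-dimensional complex inner product space and V a subspace of W. For subspaces p₁, p₂ ≤ V and q₁, q₂ ≤ Vᗮ, the lattice operations are computed componentwise: (p₁ ⊔ q₁) ⊓ (p₂ ⊔ q₂) = (p₁ ⊓ p₂) ⊔ (q₁ ⊓ q₂). -/
theorem inf_sup_componentwise
    {W : Type*} [NormedAddCommGroup W] [InnerProductSpace ℂ W]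
    [FiniteDimensional ℂ W] (V : Submodule ℂ W)
    (p₁ p₂ q₁ q₂ : Submodule ℂ W)
    (hp₁ : p₁ ≤ V) (hp₂ : p₂ ≤ V) (hq₁ : q₁ ≤ Vᗮ) (hq₂ : q₂ ≤ Vᗮ) :
    (p₁ ⊔ q₁) ⊓ (p₂ ⊔ q₂) = (p₁ ⊓ p₂) ⊔ (q₁ ⊓ q₂) := by
  apply le_antisymm
  · rintro x ⟨h1, h2⟩
    obtain ⟨a, ha, b, hb, rfl⟩ := Submodule.mem_sup.mp h1
    obtain ⟨c, hc, d, hd, hcd⟩ := Submodule.mem_sup.mp h2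
    have hV : a - c ∈ V ⊓ Vᗮ := by
      refine ⟨V.sub_mem (hp₁ ha) (hp₂ hc), ?_⟩
      have h : a - c = d - b := by
        rw [sub_eq_sub_iff_add_eq_add, ← hcd, add_comm]
      rw [h]
      exact Vᗮ.sub_mem (hq₂ hd) (hq₁ hb)
    rw [V.inf_orthogonal_eq_bot] at hV
    have hac : a = c := sub_eq_zero.mp ((Submodule.mem_bot ℂ).mp hV)
    have hbd : b = d := by
      have : c + d = c + b := by rw [hcd, hac]
      exact (add_left_cancel this).symm
    exact Submodule.mem_sup.mpr ⟨a, ⟨ha, hac ▸ hc⟩, b, ⟨hb, hbd ▸ hd⟩, rfl⟩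
  · apply sup_le
    · exact le_inf (le_trans inf_le_left le_sup_left) (le_trans inf_le_right le_sup_left)
    · exact le_inf (le_trans inf_le_left le_sup_right) (le_trans inf_le_right le_sup_right)
end
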